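/- Let 0 < C < 1. For nonnegative reals e_0, …, e_{r−1}, L > 0, and any event indicator χ ∈ {0,1}: (Σ_{i=0}^{r−1} C^i e_i)² χ ≤ (1−C)^{-1} ( Σ_{i=0}^{r−1} C^i e_i² 1{e_i > L} + L² (1−C)^{-1} χ ). -/

import Mathlib

open Finset

lemma geom_aux (C : ℝ) (hC0 : 0 < C) (hC1 : C < 1) (r : ℕ) :
    ∑ i ∈ range r, C ^ i ≤ (1 - C)⁻¹ := by
  rw [geom_sum_eq hC1.ne r]
  have h1 : (0:ℝ) < 1 - C := by linarith
  have heq : (C ^ r - 1) / (C - 1) = (1 - C ^ r) / (1 - C) := by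
    rw [← neg_div_neg_eq]; ring_nf
  rw [heq, inv_eq_one_div, div_le_div_iff₀ h1 h1]
  nlinarith [pow_pos hC0 r]

/-- truncation inequality (pr9) with geometric weights. -/
theorem truncation_inequality (C : ℝ) (hC0 : 0 < C) (hC1 : C < 1)
    (r : ℕ) (e : ℕ → ℝ) (he : ∀ i, 0 ≤ e i) (L : ℝ) (hL : 0 < L)
    (χ : ℝ) (hχ : χ = 0 ∨ χ = 1) :
    (∑ i ∈ range r, C ^ i * e i) ^ 2 * χ ≤
      (1 - C)⁻¹ *
        ((∑ i ∈ range r, C ^ i * (if L < e i then e i ^ 2 else 0)) +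
          L ^ 2 * (1 - C)⁻¹ * χ) := by
  have h1 : (0:ℝ) < 1 - C := by linarith
  have hinv : (0:ℝ) ≤ (1 - C)⁻¹ := le_of_lt (inv_pos.2 h1)
  have hind : 0 ≤ ∑ i ∈ range r, C ^ i * (if L < e i then e i ^ 2 else 0) := by
    apply sum_nonneg
    intro i _
    have hp : (0:ℝ) ≤ C ^ i := le_of_lt (pow_pos hC0 i)
    positivity
  rcases hχ with h | h
  · rw [h]
    simp only [mul_zero, add_zero]
    positivity
  · rw [h, mul_one, mul_one]
    -- Cauchy–Schwarz
    have hCS : (∑ i ∈ range r, C ^ i * e i) ^ 2 ≤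
        (∑ i ∈ range r, C ^ i) * ∑ i ∈ range r, C ^ i * e i ^ 2 := by
      have := sum_mul_sq_le_sq_mul_sq (range r)
        (fun i => Real.sqrt (C ^ i)) (fun i => Real.sqrt (C ^ i) * e i)
      have hrw : ∀ i ∈ range r,
          Real.sqrt (C ^ i) * (Real.sqrt (C ^ i) * e i) = C ^ i * e i := by
        intro i _
        rw [← mul_assoc, Real.mul_self_sqrt (le_of_lt (pow_pos hC0 i))]
      rw [sum_congr rfl hrw] at this
      refine this.trans_eq ?_
      congr 1
      · exact sum_congr rfl fun i _ => by
          rw [sq, Real.mul_self_sqrt (le_of_lt (pow_pos hC0 i))]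
      · exact sum_congr rfl fun i _ => by
          rw [mul_pow, sq (Real.sqrt _), Real.mul_self_sqrt (le_of_lt (pow_pos hC0 i))]
    -- split e_i^2 ≤ ind + L^2
    have hsplit : ∑ i ∈ range r, C ^ i * e i ^ 2 ≤
        (∑ i ∈ range r, C ^ i * (if L < e i then e i ^ 2 else 0)) + L ^ 2 * (1 - C)⁻¹ := by
      have : ∑ i ∈ range r, C ^ i * e i ^ 2 ≤
          ∑ i ∈ range r, (C ^ i * (if L < e i then e i ^ 2 else 0) + C ^ i * L ^ 2) := by
        apply sum_le_sum
        intro i _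
        have hp : (0:ℝ) ≤ C ^ i := le_of_lt (pow_pos hC0 i)
        by_cases h : L < e i
        · simp only [h, if_pos]
          nlinarith [sq_nonneg L]
        · simp only [h, if_neg, not_false_iff]
          push_neg at h
          have : e i ^ 2 ≤ L ^ 2 := by nlinarith [he i]
          nlinarith
      rw [sum_add_distrib, ← sum_mul] at this
      refine this.trans ?_
      have hg : (∑ i ∈ range r, C ^ i) * L ^ 2 ≤ L ^ 2 * (1 - C)⁻¹ := by
        rw [mul_comm]
        gcongr
        exact geom_aux C hC0 hC1 r
      linarith
    have hsum2 : 0 ≤ ∑ i ∈ range r, C ^ i * e i ^ 2 := by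
      apply sum_nonneg; intro i _
      have := pow_pos hC0 i; positivity
    calc (∑ i ∈ range r, C ^ i * e i) ^ 2
        ≤ (∑ i ∈ range r, C ^ i) * ∑ i ∈ range r, C ^ i * e i ^ 2 := hCS
      _ ≤ (1 - C)⁻¹ * ∑ i ∈ range r, C ^ i * e i ^ 2 := by
          gcongr; exact geom_aux C hC0 hC1 r
      _ ≤ (1 - C)⁻¹ * ((∑ i ∈ range r, C ^ i * (if L < e i then e i ^ 2 else 0)) +
            L ^ 2 * (1 - C)⁻¹) := by gcongr
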